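/- arXiv:2108.06802 — 5 statements merged into one kernel-verified Lean document; each statement's English description precedes it below -/
import Mathlib

section
/- Let C be a category, and let F and T be monads on C. Suppose the composite functor T ∘ F is equipped with a monad structure with multiplication m_{TF} such that (i) T ◁ η_F : T ⟶ TF and η_T ▷ F : F ⟶ TF are morphisms of monads, and (ii) the composite TF ⟶ TFTF ⟶ TF, obtained by inserting the units η_F and η_T componentwise (via T ◁ η_F and η_T ▷ F) between T and F and then applying m_{TF}, is the identity of TF. Then the natural transformation c : FT ⟶ TF defined by c = m_{TF} ∘ (η_T ▷ F ∘ T ◁ η_F), where η_T ▷ F ∘ T ◁ η_F : FT ⟶ TFTF is applied componentwise, is a distributive law of F across T, i.e. it satisfies the two unit axioms and the two multiplication-compatibility axioms of a distributive law. -/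
open CategoryTheory

variable {C : Type*} [Category C]

/-- The natural transformation `c = m_{TF} ∘ (η_T F T η_F) : FT ⟶ TF`
extracted from a composition (a monad structure `(η, μ)` on `T∘F`). -/
def beckLaw (T F : Monad C)
    (μ : (F.toFunctor ⋙ T.toFunctor) ⋙ (F.toFunctor ⋙ T.toFunctor) ⟶
      F.toFunctor ⋙ T.toFunctor) (X : C) :
    F.toFunctor.obj (T.toFunctor.obj X) ⟶ T.toFunctor.obj (F.toFunctor.obj X) :=
  F.toFunctor.map (T.toFunctor.map (F.η.app X)) ≫
    T.η.app (F.toFunctor.obj (T.toFunctor.obj (F.toFunctor.obj X))) ≫ μ.app X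

/-- Beck: a composition of the monad `T` with the monad `F`,
i.e. a monad structure `(η, μ)` on the composite `T∘F` such that
`T ◁ η_F` and `η_T ▷ F` are monad morphisms and the middle unit condition
holds, yields a distributive law `c = m_{TF} ∘ (η_T F T η_F) : FT ⟶ TF`. -/
theorem beck_composition_gives_distributiveLaw (T F : Monad C)
    (η : 𝟭 C ⟶ F.toFunctor ⋙ T.toFunctor)
    (μ : (F.toFunctor ⋙ T.toFunctor) ⋙ (F.toFunctor ⋙ T.toFunctor) ⟶
      F.toFunctor ⋙ T.toFunctor)
    -- monad laws for `(η, μ)` on `T∘F`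
    (hleft : ∀ X : C, η.app (T.toFunctor.obj (F.toFunctor.obj X)) ≫ μ.app X =
      𝟙 (T.toFunctor.obj (F.toFunctor.obj X)))
    (hright : ∀ X : C,
      T.toFunctor.map (F.toFunctor.map (η.app X)) ≫ μ.app X =
        𝟙 (T.toFunctor.obj (F.toFunctor.obj X)))
    (hassoc : ∀ X : C,
      T.toFunctor.map (F.toFunctor.map (μ.app X)) ≫ μ.app X =
        μ.app (T.toFunctor.obj (F.toFunctor.obj X)) ≫ μ.app X)
    -- `T ◁ η_F : T ⟶ TF` is a morphism of monads
    (hτη : ∀ X : C, T.η.app X ≫ T.toFunctor.map (F.η.app X) = η.app X)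
    (hτμ : ∀ X : C, T.μ.app X ≫ T.toFunctor.map (F.η.app X) =
      T.toFunctor.map (F.η.app (T.toFunctor.obj X)) ≫
        T.toFunctor.map (F.toFunctor.map (T.toFunctor.map (F.η.app X))) ≫
          μ.app X)
    -- `η_T ▷ F : F ⟶ TF` is a morphism of monads
    (hρη : ∀ X : C, F.η.app X ≫ T.η.app (F.toFunctor.obj X) = η.app X)
    (hρμ : ∀ X : C, F.μ.app X ≫ T.η.app (F.toFunctor.obj X) =
      T.η.app (F.toFunctor.obj (F.toFunctor.obj X)) ≫
        T.toFunctor.map (F.toFunctor.map (T.η.app (F.toFunctor.obj X))) ≫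
          μ.app X)
    -- the middle unit condition `m_{TF} ∘ (T η_F η_T F) = id`
    (hmid : ∀ X : C,
      T.toFunctor.map (T.η.app (F.toFunctor.obj X) ≫
          F.η.app (T.toFunctor.obj (F.toFunctor.obj X))) ≫ μ.app X =
        𝟙 (T.toFunctor.obj (F.toFunctor.obj X))) :
    -- `c = beckLaw T F μ` is natural and satisfies the distributive law axioms
    (∀ (X Y : C) (f : X ⟶ Y),
      F.toFunctor.map (T.toFunctor.map f) ≫ beckLaw T F μ Y =
        beckLaw T F μ X ≫ T.toFunctor.map (F.toFunctor.map f)) ∧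
    (∀ X : C, F.η.app (T.toFunctor.obj X) ≫ beckLaw T F μ X =
      T.toFunctor.map (F.η.app X)) ∧
    (∀ X : C, F.toFunctor.map (T.η.app X) ≫ beckLaw T F μ X =
      T.η.app (F.toFunctor.obj X)) ∧
    (∀ X : C, F.toFunctor.map (T.μ.app X) ≫ beckLaw T F μ X =
      beckLaw T F μ (T.toFunctor.obj X) ≫
        T.toFunctor.map (beckLaw T F μ X) ≫ T.μ.app (F.toFunctor.obj X)) ∧
    (∀ X : C, F.μ.app (T.toFunctor.obj X) ≫ beckLaw T F μ X =
      F.toFunctor.map (beckLaw T F μ X) ≫ beckLaw T F μ (F.toFunctor.obj X) ≫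
        T.toFunctor.map (F.μ.app X)) := by
  have Fη_nat : ∀ {A B : C} (g : A ⟶ B), g ≫ F.η.app B = F.η.app A ≫ F.map g :=
    fun g => by simpa using F.η.naturality g
  have Tη_nat : ∀ {A B : C} (g : A ⟶ B), g ≫ T.η.app B = T.η.app A ≫ T.map g :=
    fun g => by simpa using T.η.naturality g
  have μ_nat : ∀ {A B : C} (g : A ⟶ B),
      T.map (F.map (T.map (F.map g))) ≫ μ.app B = μ.app A ≫ T.map (F.map g) :=
    fun g => by simpa using μ.naturality g
  have Fμ_nat : ∀ {A B : C} (g : A ⟶ B),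
      F.map (F.map g) ≫ F.μ.app B = F.μ.app A ≫ F.map g :=
    fun g => by simpa using F.μ.naturality g
  have Fη_natr : ∀ {A B : C} (g : A ⟶ B) {Z : C} (h : F.obj B ⟶ Z),
      g ≫ F.η.app B ≫ h = F.η.app A ≫ F.map g ≫ h := by
    intro A B g Z h; rw [← Category.assoc, Fη_nat, Category.assoc]
  have Tη_natr : ∀ {A B : C} (g : A ⟶ B) {Z : C} (h : T.obj B ⟶ Z),
      g ≫ T.η.app B ≫ h = T.η.app A ≫ T.map g ≫ h := by
    intro A B g Z h; rw [← Category.assoc, Tη_nat, Category.assoc]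
  have μ_natr : ∀ {A B : C} (g : A ⟶ B) {Z : C} (h : T.obj (F.obj B) ⟶ Z),
      T.map (F.map (T.map (F.map g))) ≫ μ.app B ≫ h = μ.app A ≫ T.map (F.map g) ≫ h := by
    intro A B g Z h; rw [← Category.assoc, μ_nat, Category.assoc]
  have Fμ_natr : ∀ {A B : C} (g : A ⟶ B) {Z : C} (h : F.obj B ⟶ Z),
      F.map (F.map g) ≫ F.μ.app B ≫ h = F.μ.app A ≫ F.map g ≫ h := by
    intro A B g Z h; rw [← Category.assoc, Fμ_nat, Category.assoc]
  have hρμ_r : ∀ (Y : C) {Z : C} (h : T.obj (F.obj Y) ⟶ Z),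
      F.μ.app Y ≫ T.η.app (F.obj Y) ≫ h =
        T.η.app (F.obj (F.obj Y)) ≫ T.map (F.map (T.η.app (F.obj Y))) ≫ μ.app Y ≫ h := by
    intro Y Z h; rw [← Category.assoc, hρμ Y]; simp only [Category.assoc]
  have hρη_r : ∀ (Y : C) {Z : C} (h : T.obj (F.obj Y) ⟶ Z),
      F.η.app Y ≫ T.η.app (F.obj Y) ≫ h = η.app Y ≫ h := by
    intro Y Z h; rw [← Category.assoc, hρη Y]
  have hmid' : ∀ X : C, T.map (T.η.app (F.obj X)) ≫
      T.map (F.η.app (T.obj (F.obj X))) ≫ μ.app X = 𝟙 (T.obj (F.obj X)) := by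
    intro X; rw [← Functor.map_comp_assoc]; exact hmid X
  -- (Lstar): μ = T(q) ≫ t
  have h1 : ∀ X : C,
      T.map (T.η.app (F.obj (T.obj (F.obj X))) ≫ μ.app X) ≫
        T.map (F.η.app (T.obj (F.obj X))) ≫ μ.app X = μ.app X := by
    intro X
    rw [← Category.assoc, ← Functor.map_comp, Category.assoc,
      Fη_nat (A := T.obj (F.obj (T.obj (F.obj X)))) (B := T.obj (F.obj X)) (μ.app X)]
    rw [← Category.assoc, Functor.map_comp, Category.assoc, hassoc X,
      ← Category.assoc, hmid (T.obj (F.obj X))]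
    simp
  -- (LCstar): TF(ρ) ≫ μ = T(F.μ)
  have h2 : ∀ X : C,
      T.map (F.map (T.η.app (F.obj X))) ≫ μ.app X = T.map (F.μ.app X) := by
    intro X
    rw [← h1 X, ← Category.assoc, ← Functor.map_comp]
    rw [Tη_natr (A := F.obj (F.obj X)) (B := F.obj (T.obj (F.obj X)))
      (F.map (T.η.app (F.obj X))) (μ.app X)]
    rw [← hρμ X, Functor.map_comp, Category.assoc, hmid' X]
    simp
  -- (LE)
  have h3 : ∀ X : C,
      T.map (F.map (T.map (F.η.app (F.obj X)))) ≫ μ.app (F.obj X) ≫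
        T.map (F.μ.app X) = μ.app X := by
    intro X
    rw [← h2 X]
    rw [← μ_natr (A := F.obj X) (B := T.obj (F.obj X)) (T.η.app (F.obj X)) (μ.app X)]
    rw [← hassoc X]
    simp only [← Functor.map_comp_assoc, ← Functor.map_comp, Category.assoc]
    rw [← Fη_nat (A := F.obj X) (B := T.obj (F.obj X)) (T.η.app (F.obj X)), hmid X]
    simp
  -- (LC): t = T.μ F
  have h4 : ∀ X : C,
      T.map (F.η.app (T.obj (F.obj X))) ≫ μ.app X = T.μ.app (F.obj X) := by
    intro X
    have e1 : T.μ.app (F.obj X) =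
        T.μ.app (F.obj X) ≫ T.map (F.η.app (F.obj X)) ≫ T.map (F.μ.app X) := by
      rw [← Functor.map_comp, F.left_unit]
      simp
    rw [e1, ← Category.assoc, hτμ (F.obj X)]
    simp only [Category.assoc]
    rw [h3 X]
  -- (LB): T(q) ≫ T.μ F = μ
  have h5 : ∀ X : C,
      T.map (T.η.app (F.obj (T.obj (F.obj X))) ≫ μ.app X) ≫ T.μ.app (F.obj X) =
        μ.app X := by
    intro X
    rw [← h4 X, ← Category.assoc, Category.assoc, h1 X]
  have h5' : ∀ X : C,
      T.map (T.η.app (F.obj (T.obj (F.obj X)))) ≫ T.map (μ.app X) ≫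
        T.μ.app (F.obj X) = μ.app X := by
    intro X; rw [← Functor.map_comp_assoc]; exact h5 X
  refine ⟨?_, ?_, ?_, ?_, ?_⟩
  · -- naturality
    intro X Y f
    simp only [beckLaw]
    rw [← Functor.map_comp_assoc, ← Functor.map_comp, Fη_nat f,
      Functor.map_comp, Functor.map_comp_assoc]
    rw [Tη_natr (A := F.obj (T.obj (F.obj X))) (B := F.obj (T.obj (F.obj Y)))
      (F.map (T.map (F.map f))) (μ.app Y)]
    rw [μ_nat f]
    simp only [Category.assoc]
  · -- F-unit
    intro X
    simp only [beckLaw]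
    rw [← Fη_natr (A := T.obj X) (B := T.obj (F.obj X)) (T.map (F.η.app X))
      (T.η.app (F.obj (T.obj (F.obj X))) ≫ μ.app X)]
    rw [hρη_r (T.obj (F.obj X)) (μ.app X), hleft X]
    simp
  · -- T-unit
    intro X
    simp only [beckLaw]
    rw [← Functor.map_comp_assoc, hτη X]
    rw [Tη_natr (A := F.obj X) (B := F.obj (T.obj (F.obj X))) (F.map (η.app X)) (μ.app X)]
    rw [hright X]
    simp
  · -- T-multiplication
    intro X
    simp only [beckLaw, Functor.map_comp, Category.assoc]
    rw [h5' X]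
    rw [← μ_natr (A := T.obj X) (B := T.obj (F.obj X)) (T.map (F.η.app X)) (μ.app X)]
    rw [← hassoc X]
    rw [← Tη_natr (A := F.obj (T.obj (F.obj (T.obj X))))
      (B := F.obj (T.obj (F.obj (T.obj (F.obj X)))))
      (F.map (T.map (F.map (T.map (F.η.app X))))) (T.map (F.map (μ.app X)) ≫ μ.app X)]
    rw [← Tη_natr (A := F.obj (T.obj (F.obj (T.obj (F.obj X)))))
      (B := F.obj (T.obj (F.obj X))) (F.map (μ.app X)) (μ.app X)]
    rw [← Functor.map_comp_assoc, hτμ X]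
    simp only [Functor.map_comp, Category.assoc]
  · -- F-multiplication
    intro X
    have hQ : beckLaw T F μ (F.obj X) ≫ T.map (F.μ.app X) =
        T.η.app (F.obj (T.obj (F.obj X))) ≫ μ.app X := by
      simp only [beckLaw, Category.assoc]
      rw [← h3 X]
      rw [← Tη_natr (A := F.obj (T.obj (F.obj X)))
        (B := F.obj (T.obj (F.obj (F.obj X))))
        (F.map (T.map (F.η.app (F.obj X)))) (μ.app (F.obj X) ≫ T.map (F.μ.app X))]
    rw [hQ]
    simp only [beckLaw, Functor.map_comp, Category.assoc]
    rw [← Fμ_natr (A := T.obj X) (B := T.obj (F.obj X)) (T.map (F.η.app X))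
      (T.η.app (F.obj (T.obj (F.obj X))) ≫ μ.app X)]
    rw [hρμ_r (T.obj (F.obj X)) (μ.app X)]
    rw [← hassoc X]
    rw [← Tη_natr (A := F.obj (F.obj (T.obj (F.obj X))))
      (B := F.obj (T.obj (F.obj (T.obj (F.obj X)))))
      (F.map (T.η.app (F.obj (T.obj (F.obj X))))) (T.map (F.map (μ.app X)) ≫ μ.app X)]
    rw [← Tη_natr (A := F.obj (T.obj (F.obj (T.obj (F.obj X)))))
      (B := F.obj (T.obj (F.obj X))) (F.map (μ.app X)) (μ.app X)]
end

section
/- Let B be a commutative ring and A a commutative B-algebra equipped with a B-algebra augmentation ε : A → B splitting the structure map, with augmentation ideal M = ker ε. Suppose there exists a B-algebra homomorphism μ : A ×_B A → A (where A ×_B A is the fiber product of two copies of A over ε) such that μ(x, 0) = x and μ(0, y) = y for all x, y ∈ M (viewing M ⊕ M ⊆ A ×_B A). Then x·y = 0 for all x, y ∈ M; that is, A is a square-zero extension of B. -/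
/-- The fiber product `A ×_B A` of two copies of an augmented `B`-algebra `A`
over its augmentation `ε`, as a subalgebra of `A × A`. -/
def fiberProduct {B A : Type*} [CommRing B] [CommRing A] [Algebra B A]
    (ε : A →ₐ[B] B) : Subalgebra B (A × A) where
  carrier := {p : A × A | ε p.1 = ε p.2}
  mul_mem' := by
    intro x y hx hy
    simp only [Set.mem_setOf_eq, Prod.fst_mul, Prod.snd_mul, map_mul] at *
    rw [hx, hy]
  add_mem' := by
    intro x y hx hy
    simp only [Set.mem_setOf_eq, Prod.fst_add, Prod.snd_add, map_add] at *
    rw [hx, hy]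
  algebraMap_mem' := by intro b; simp

/-- if an augmented commutative `B`-algebra `A` admits a
`B`-algebra homomorphism `μ : A ×_B A → A` which is unital on the augmentation
ideal `M = ker ε` (i.e. `μ(x,0) = x` and `μ(0,y) = y` for `x, y ∈ M`), then
the augmentation ideal squares to zero: `x·y = 0` for all `x, y ∈ M`. -/
theorem squareZero_of_abelian_multiplication
    {B A : Type*} [CommRing B] [CommRing A] [Algebra B A]
    (ε : A →ₐ[B] B) (μ : fiberProduct ε →ₐ[B] A)
    (hl : ∀ x : A, ∀ hx : ε x = 0,
      μ ⟨(x, 0), show ε x = ε 0 by simp [hx]⟩ = x)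
    (hr : ∀ y : A, ∀ hy : ε y = 0,
      μ ⟨(0, y), show ε 0 = ε y by simp [hy]⟩ = y) :
    ∀ x y : A, ε x = 0 → ε y = 0 → x * y = 0 := by
  intro x y hx hy
  have h1 := hl x hx
  have h2 := hr y hy
  calc x * y = μ ⟨(x, 0), show ε x = ε 0 by simp [hx]⟩ * μ ⟨(0, y), show ε 0 = ε y by simp [hy]⟩ := by rw [h1, h2]
    _ = μ (⟨(x, 0), show ε x = ε 0 by simp [hx]⟩ * ⟨(0, y), show ε 0 = ε y by simp [hy]⟩) := (map_mul μ _ _).symm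
    _ = μ 0 := by
        congr 1
        ext <;> simp
    _ = 0 := map_zero μ
end

section
/- Let p ≥ 2 be an integer, n ≥ 1, a an integer, s_1, …, s_n integers, and δ_1, …, δ_n ∈ {0, 1}, satisfying s_i > p·s_{i+1} − δ_{i+1} for all 1 ≤ i < n. Then the following are equivalent: (1) for every 1 ≤ i ≤ n, 2·s_i − δ_i ≥ Σ_{j=i+1}^{n} (2·s_j·(p−1) − δ_j) + a; (2) 2·s_n − δ_n ≥ a. -/
open Finset in
/-- odd-primary reduction of the instability condition for
completely unadmissible sequences. -/
theorem instability_reduction_odd (p : ℕ) (hp : 2 ≤ p) (n : ℕ) (hn : 1 ≤ n)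
    (a : ℤ) (s : ℕ → ℤ) (δ : ℕ → ℤ)
    (hδ : ∀ i : ℕ, 1 ≤ i → i ≤ n → δ i = 0 ∨ δ i = 1)
    (hunadm : ∀ i : ℕ, 1 ≤ i → i < n → s i > (p : ℤ) * s (i + 1) - δ (i + 1)) :
    (∀ i : ℕ, 1 ≤ i → i ≤ n →
        2 * s i - δ i ≥
          (∑ j ∈ Icc (i + 1) n, (2 * s j * ((p : ℤ) - 1) - δ j)) + a) ↔
      2 * s n - δ n ≥ a := by
  set F : ℕ → ℤ := fun i =>
    2 * s i - δ i - ∑ j ∈ Icc (i + 1) n, (2 * s j * ((p : ℤ) - 1) - δ j) with hF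
  have hempty : Icc (n + 1) n = (∅ : Finset ℕ) := Finset.Icc_eq_empty (by omega)
  have hFn : F n = 2 * s n - δ n := by simp [hF, hempty]
  have step : ∀ i : ℕ, 1 ≤ i → i < n → F (i + 1) ≤ F i := by
    intro i hi hin
    have hsplit : ∑ j ∈ Icc (i + 1) n, (2 * s j * ((p : ℤ) - 1) - δ j)
        = (2 * s (i + 1) * ((p : ℤ) - 1) - δ (i + 1))
          + ∑ j ∈ Icc (i + 2) n, (2 * s j * ((p : ℤ) - 1) - δ j) := by
      rw [← Finset.Ico_add_one_right_eq_Icc, ← Finset.Ico_add_one_right_eq_Icc]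
      exact Finset.sum_eq_sum_Ico_succ_bot (by omega) _
    have hu := hunadm i hi hin
    have hδi : δ i = 0 ∨ δ i = 1 := hδ i hi (by omega)
    have hring : 2 * s (i + 1) * ((p : ℤ) - 1)
        = 2 * ((p : ℤ) * s (i + 1)) - 2 * s (i + 1) := by ring
    simp only [hF, hsplit]
    rcases hδi with h | h <;> rw [h] <;> linarith
  have mono : ∀ i j : ℕ, 1 ≤ i → i ≤ j → j ≤ n → F j ≤ F i := by
    intro i j hi hij
    induction j, hij using Nat.le_induction with
    | base => intro _; exact le_refl _
    | succ j hj ih =>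
      intro hjn
      exact le_trans (step j (le_trans hi hj) (by omega)) (ih (by omega))
  constructor
  · intro h
    have := h n hn le_rfl
    simpa [hempty] using this
  · intro h i hi hin
    have h1 : F n ≤ F i := mono i n hi hin le_rfl
    have : a ≤ F i := le_trans (by rw [hFn]; exact h) h1
    simp only [hF] at this
    linarith
end

section
/- Let p be a prime, R = ℤ[x] the polynomial ring, and S = R[y]/(1 − (1 − y)^p). Then S is a free R-module with basis 1, y, y², …, y^{p−1}, and the determinant of the R-linear endomorphism of S given by multiplication by the element x + y − x·y equals 1 − (1 − x)^p. -/
/-!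
Substituting `z = 1 - y` turns `R[y]/(1 - (1 - y)^p)` into `R[z]/(z^p - 1)` and `x + y - xy`
into `1 - (1 - x) z`. In a power basis generated by `z`, `det (1 - c z)` is the reversed
characteristic polynomial of `z` at `c`; that polynomial is `z^p - 1`, with reverse `1 - z^p`.
The basis `1, y, …, y^{p-1}` exists because `1 - (1 - y)^p` is a unit multiple of the monic
`(y - 1)^p + (-1)^(p+1)`.
-/

open Polynomial

variable {R : Type*} [CommRing R]

namespace Polynomial

theorem reverse_X_pow_sub_one [Nontrivial R] (n : ℕ) :
    ((X : R[X]) ^ n - 1).reverse = 1 - X ^ n := by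
  have hX : (X ^ n : R[X]).reverse = 1 := by
    rw [← mul_one (X ^ n : R[X]), reverse_X_pow_mul, ← C_1, reverse_C]
  rw [sub_eq_add_neg, ← C_1, ← C_neg, reverse_add_C, natDegree_X_pow, hX]
  simp [sub_eq_add_neg]

theorem exists_monic_associated_one_sub_one_sub_X_pow [Nontrivial R] {p : ℕ} (hp : p ≠ 0) :
    ∃ g : R[X], g.Monic ∧ g.natDegree = p ∧ Associated g (1 - (1 - X) ^ p) := by
  have hmonic : ((X - C 1 : R[X]) ^ p).Monic := (monic_X_sub_C 1).pow p
  have hdeg : ((X - C 1 : R[X]) ^ p).natDegree = p := by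
    rw [(monic_X_sub_C 1).natDegree_pow, natDegree_X_sub_C, mul_one]
  refine ⟨(X - C 1) ^ p + C ((-1) ^ (p + 1)), ?_, by rw [natDegree_add_C, hdeg], ?_⟩
  · refine hmonic.add_of_left (degree_C_le.trans_lt ?_)
    rw [degree_eq_natDegree hmonic.ne_zero, hdeg]
    exact_mod_cast Nat.pos_of_ne_zero hp
  · refine ⟨(-1) ^ (p + 1), ?_⟩
    have hsq : ((-1 : R[X]) ^ p) ^ 2 = 1 := by
      rw [← pow_mul, mul_comm, pow_mul, neg_one_sq, one_pow]
    simp only [Units.val_neg, Units.val_pow_eq_pow_val, Units.val_one, map_pow, map_neg, map_one]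
    rw [show (1 - X : R[X]) = -(X - 1) by ring, neg_pow (X - 1)]
    linear_combination hsq

end Polynomial

namespace AdjoinRoot

theorem minpoly_root_of_monic {g : R[X]} (hg : g.Monic) : minpoly R (root g) = g :=
  (minpoly.unique' R (root g) hg (by simp) fun _ hq =>
    or_iff_not_imp_left.2 fun hq0 => by
      rw [aeval_eq]
      exact mk_ne_zero_of_degree_lt hg hq0 hq).symm

theorem exists_basis_root_pow_of_associated {f g : R[X]} (hg : g.Monic) (hgf : Associated g f)
    {n : ℕ} (hn : g.natDegree = n) :
    ∃ b : Module.Basis (Fin n) R (AdjoinRoot f), ∀ i, b i = root f ^ (i : ℕ) := by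
  subst hn
  let pb := (powerBasis' hg).map (algEquivOfAssociated R g f hgf)
  exact ⟨pb.basis, fun i => (pb.basis_eq_pow i).trans (by simp [pb])⟩

noncomputable def compOneSubEquiv (f : R[X]) : AdjoinRoot (f.comp (1 - X)) ≃ₐ[R] AdjoinRoot f :=
  AlgEquiv.ofAlgHom
    (liftAlgHom _ (Algebra.ofId R _) (1 - root f) (by
      change aeval _ _ = 0
      simp [aeval_comp, aeval_eq]))
    (liftAlgHom _ (Algebra.ofId R _) (1 - root _) (by
      change aeval _ _ = 0
      have h := (aeval_eq (f := f.comp (1 - X)) (f.comp (1 - X))).trans mk_self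
      rwa [aeval_comp, map_sub, map_one, aeval_X] at h))
    (algHom_ext (by simp)) (algHom_ext (by simp))

@[simp]
theorem compOneSubEquiv_root (f : R[X]) : compOneSubEquiv f (root _) = 1 - root f := by
  simp [compOneSubEquiv]

end AdjoinRoot

theorem PowerBasis.norm_one_sub_smul_gen {S : Type*} [Ring S] [Algebra R S]
    (pb : PowerBasis R S) (c : R) :
    Algebra.norm R (1 - c • pb.gen) = (minpoly R pb.gen).reverse.eval c := by
  rw [Algebra.norm_eq_matrix_det pb.basis, ← charpoly_leftMulMatrix, Matrix.reverse_charpoly,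
    Matrix.charpolyRev, ← coe_evalRingHom, RingHom.map_det, map_sub, map_one, map_smul, map_sub,
    map_one]
  congr 2
  ext i j
  simp only [Matrix.smul_apply, smul_eq_mul, RingHom.mapMatrix_apply, coe_evalRingHom,
    Matrix.map_apply, X_mul_C, eval_mul, eval_C, eval_X]
  exact mul_comm _ _

theorem AdjoinRoot.norm_one_sub_smul_one_sub_root [Nontrivial R] {p : ℕ} (hp : p ≠ 0) (c : R) :
    Algebra.norm R (1 - c • (1 - root (1 - (1 - X : R[X]) ^ p))) = 1 - c ^ p := by
  have hassoc : Associated (X ^ p - 1 : R[X]) ((1 - (1 - X : R[X]) ^ p).comp (1 - X)) := by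
    rw [show (1 - (1 - X : R[X]) ^ p).comp (1 - X) = -(X ^ p - 1) by simp]
    exact (Associated.refl _).neg_right
  let e := (algEquivOfAssociated R _ _ hassoc).trans (compOneSubEquiv _)
  have hmonic : (X ^ p - 1 : R[X]).Monic := by simpa using monic_X_pow_sub_C (1 : R) hp
  let pb := (powerBasis' hmonic).map e
  have hgen : pb.gen = 1 - root (1 - (1 - X : R[X]) ^ p) := by
    change e (root _) = _
    simp [e]
  have hminpoly : minpoly R pb.gen = X ^ p - 1 := by
    change minpoly R (e (root _)) = _
    rw [minpoly.algEquiv_eq, minpoly_root_of_monic hmonic]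
  rw [← hgen, pb.norm_one_sub_smul_gen, hminpoly, reverse_X_pow_sub_one]
  simp

/-- over `R = ℤ[x]`, the ring `S = R[y]/(1 − (1 − y)^p)` is free
with basis `1, y, …, y^{p−1}`, and the determinant of multiplication by
`x + y − x·y` on `S` equals `1 − (1 − x)^p`. -/
theorem norm_of_multiplicative_coordinate (p : ℕ) (hp : p.Prime) :
    (∃ b : Module.Basis (Fin p) (Polynomial ℤ)
        (AdjoinRoot (1 - (1 - X : Polynomial (Polynomial ℤ)) ^ p)),
      ∀ i : Fin p,
        b i = AdjoinRoot.root (1 - (1 - X : Polynomial (Polynomial ℤ)) ^ p) ^ (i : ℕ)) ∧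
    LinearMap.det
      (LinearMap.mulLeft (Polynomial ℤ)
        (algebraMap (Polynomial ℤ)
            (AdjoinRoot (1 - (1 - X : Polynomial (Polynomial ℤ)) ^ p)) X +
          AdjoinRoot.root (1 - (1 - X : Polynomial (Polynomial ℤ)) ^ p) -
          algebraMap (Polynomial ℤ)
              (AdjoinRoot (1 - (1 - X : Polynomial (Polynomial ℤ)) ^ p)) X *
            AdjoinRoot.root (1 - (1 - X : Polynomial (Polynomial ℤ)) ^ p))) =
      1 - (1 - X : Polynomial ℤ) ^ p := by
  obtain ⟨g, hg, hdeg, hassoc⟩ :=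
    exists_monic_associated_one_sub_one_sub_X_pow (R := ℤ[X]) hp.ne_zero
  refine ⟨AdjoinRoot.exists_basis_root_pow_of_associated hg hassoc hdeg, ?_⟩
  set y := AdjoinRoot.root (1 - (1 - X : ℤ[X][X]) ^ p)
  have hy : algebraMap ℤ[X] _ X + y - algebraMap ℤ[X] _ X * y =
      1 - (1 - X : ℤ[X]) • (1 - y) := by
    rw [Algebra.smul_def, map_sub, map_one]
    ring
  rw [hy]
  exact AdjoinRoot.norm_one_sub_smul_one_sub_root hp.ne_zero _
end

section
/- Let p be a prime, κ a field of characteristic p, and V a vector space over 𝔽_p. Consider the additive endomorphism Φ of κ ⊗_{𝔽_p} V determined by Φ(λ ⊗ v) = λ^p ⊗ v. Then the set of fixed points of Φ is exactly the image of the map V → κ ⊗_{𝔽_p} V, v ↦ 1 ⊗ v; moreover this map is injective, so the fixed points of Φ form an 𝔽_p-vector space isomorphic to V. -/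
open scoped TensorProduct

open Polynomial in
lemma frob_fixed_mem (p : ℕ) [Fact p.Prime] (κ : Type*) [Field κ] [Algebra (ZMod p) κ]
    (a : κ) (h : a ^ p = a) : ∃ c : ZMod p, algebraMap (ZMod p) κ c = a := by
  classical
  have hp1 : 1 < p := (Fact.out : p.Prime).one_lt
  set f := algebraMap (ZMod p) κ
  have hfinj : Function.Injective f := f.injective
  set P : κ[X] := X ^ p - X with hP
  have hPne : P ≠ 0 := FiniteField.X_pow_card_sub_X_ne_zero κ hp1
  have hdeg : P.natDegree = p := FiniteField.X_pow_card_sub_X_natDegree_eq κ hp1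
  have hroot : ∀ c : ZMod p, f c ∈ P.roots := by
    intro c
    rw [mem_roots hPne]
    simp [hP, IsRoot, ← map_pow, ZMod.pow_card]
  have himg : (Finset.univ.image f) ⊆ P.roots.toFinset := by
    intro x hx
    obtain ⟨c, _, rfl⟩ := Finset.mem_image.mp hx
    exact Multiset.mem_toFinset.mpr (hroot c)
  have hcard : P.roots.toFinset.card ≤ p := by
    calc P.roots.toFinset.card ≤ Multiset.card P.roots := Multiset.toFinset_card_le _
      _ ≤ P.natDegree := P.card_roots'
      _ = p := hdeg
  have hcardimg : (Finset.univ.image f).card = p := by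
    rw [Finset.card_image_of_injective _ hfinj, Finset.card_univ, ZMod.card]
  have heq : (Finset.univ.image f) = P.roots.toFinset :=
    Finset.eq_of_subset_of_card_le himg (by rw [hcardimg]; exact hcard)
  have ha : a ∈ P.roots.toFinset := by
    rw [Multiset.mem_toFinset, mem_roots hPne]
    simp [hP, IsRoot, h]
  rw [← heq] at ha
  obtain ⟨c, _, hc⟩ := Finset.mem_image.mp ha
  exact ⟨c, hc⟩


/-- for a field `κ` of characteristic `p` and an `𝔽_p`-vector
space `V`, the fixed points of the Frobenius-semilinear endomorphism
`λ ⊗ v ↦ λ^p ⊗ v` of `κ ⊗_{𝔽_p} V` are exactly the image of `v ↦ 1 ⊗ v`,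
and this map is injective. -/
theorem frobenius_fixed_points_of_base_change
    (p : ℕ) [Fact p.Prime] (κ : Type*) [Field κ] [Algebra (ZMod p) κ]
    (V : Type*) [AddCommGroup V] [Module (ZMod p) V]
    (Φ : (κ ⊗[ZMod p] V) →+ (κ ⊗[ZMod p] V))
    (hΦ : ∀ (l : κ) (v : V), Φ (l ⊗ₜ v) = (l ^ p) ⊗ₜ v) :
    (∀ x : κ ⊗[ZMod p] V,
        Φ x = x ↔ x ∈ Set.range (fun v : V => (1 : κ) ⊗ₜ[ZMod p] v)) ∧
      Function.Injective (fun v : V => (1 : κ) ⊗ₜ[ZMod p] v) := by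
  classical
  set b := Module.Basis.ofVectorSpace (ZMod p) V with hb
  set bt := Algebra.TensorProduct.basis κ b with hbt
  -- repr of 1 ⊗ v
  have hrepr1 : ∀ v : V, bt.repr ((1 : κ) ⊗ₜ[ZMod p] v)
      = (b.repr v).mapRange (algebraMap (ZMod p) κ) (map_zero _) := by
    intro v
    rw [hbt, Algebra.TensorProduct.basis_repr_tmul, one_smul]
  have hinj : Function.Injective (fun v : V => (1 : κ) ⊗ₜ[ZMod p] v) := by
    intro v w h
    have h2 := congrArg bt.repr h
    rw [hrepr1, hrepr1] at h2
    have h3 : b.repr v = b.repr w := by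
      ext i
      have := congrArg (fun f => f i) h2
      simp only [Finsupp.mapRange_apply] at this
      exact (algebraMap (ZMod p) κ).injective this
    exact b.repr.injective h3
  refine ⟨fun x => ?_, hinj⟩
  constructor
  · intro hfix
    -- compute repr of Φ x
    have hx : x = ((bt.repr x).sum fun i a => a ⊗ₜ[ZMod p] b i) := by
      conv_lhs => rw [← bt.linearCombination_repr x]
      rw [Finsupp.linearCombination_apply]
      apply Finsupp.sum_congr
      intro i _
      exact Algebra.TensorProduct.basis_repr_symm_apply' (A := κ) b (bt.repr x i) i
    have hΦx : Φ x = ((bt.repr x).sum fun i a => (a ^ p) ⊗ₜ[ZMod p] b i) := by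
      conv_lhs => rw [hx]
      rw [Finsupp.sum, map_sum]
      exact Finset.sum_congr rfl fun i _ => hΦ _ _
    have hreprΦ : ∀ i, bt.repr (Φ x) i = (bt.repr x i) ^ p := by
      intro i
      rw [hΦx, Finsupp.sum, map_sum]
      have : ∀ j, (bt.repr ((bt.repr x j ^ p) ⊗ₜ[ZMod p] b j)) i
          = if j = i then bt.repr x j ^ p else 0 := by
        intro j
        rw [← Algebra.TensorProduct.basis_repr_symm_apply' b, map_smul, ← hbt,
          bt.repr_self]
        simp [Finsupp.single_apply]
      rw [Finsupp.coe_finset_sum, Finset.sum_apply]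
      rw [Finset.sum_congr rfl fun j _ => this j,
        Finset.sum_ite_eq' (bt.repr x).support i]
      by_cases hi : i ∈ (bt.repr x).support
      · rw [if_pos hi]
      · rw [if_neg hi, Finsupp.notMem_support_iff.mp hi,
          zero_pow (Fact.out : p.Prime).ne_zero]
    have hfixc : ∀ i, (bt.repr x i) ^ p = bt.repr x i := fun i => by
      rw [← hreprΦ i, hfix]
    -- build the preimage
    set g : κ → ZMod p := fun a => if h : ∃ c : ZMod p, algebraMap (ZMod p) κ c = a
      then h.choose else 0 with hg
    have hg0 : g 0 = 0 := by
      have h0 : ∃ c : ZMod p, algebraMap (ZMod p) κ c = 0 := ⟨0, map_zero _⟩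
      rw [hg]
      simp only [dif_pos h0]
      exact (algebraMap (ZMod p) κ).injective (by rw [h0.choose_spec, map_zero])
    set d := (bt.repr x).mapRange g hg0 with hd
    refine ⟨b.repr.symm d, ?_⟩
    apply bt.repr.injective
    rw [hrepr1]
    simp only [LinearEquiv.apply_symm_apply]
    ext i
    simp only [Finsupp.mapRange_apply, hd, hg]
    have hex : ∃ c : ZMod p, algebraMap (ZMod p) κ c = bt.repr x i :=
      frob_fixed_mem p κ _ (hfixc i)
    rw [dif_pos hex, hex.choose_spec]
  · rintro ⟨v, rfl⟩
    rw [hΦ, one_pow]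
end
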